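/- Let π be a 231-avoiding permutation of [n] and λ_π the relabeling permutation defined by P(π) = λ_π ∘ π (i.e., λ_π(π(i)) = P(π)(i) for all i). If x < y are values such that no value larger than y occurs between x and y in π, then λ_π(x) < λ_π(y). -/

import Mathlib

/-- Stack sorting with fuel (fuel = length always suffices). -/
def stackSortAux : ℕ → List ℕ → List ℕ
  | 0, _ => []
  | _ + 1, [] => []
  | fuel + 1, x :: xs =>
    let l := x :: xs
    let m := l.foldr max 0
    stackSortAux fuel (l.takeWhile (· ≠ m)) ++
      stackSortAux fuel ((l.dropWhile (· ≠ m)).tail) ++ [m]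

/-- The stack sorting operator `S`: `S(ε) = ε` and `S(α n β) = S(α) S(β) n`
where `n` is the maximum element. -/
def stackSort (l : List ℕ) : List ℕ := stackSortAux l.length l

/-- `σ` avoids the pattern 231. -/
def Avoids231 (σ : List ℕ) : Prop :=
  ¬ ∃ i j k, i < j ∧ j < k ∧ k < σ.length ∧
      σ.getD k 0 < σ.getD i 0 ∧ σ.getD i 0 < σ.getD j 0

/-- `σ` avoids the pattern 132. -/
def Avoids132 (σ : List ℕ) : Prop :=
  ¬ ∃ i j k, i < j ∧ j < k ∧ k < σ.length ∧
      σ.getD i 0 < σ.getD k 0 ∧ σ.getD k 0 < σ.getD j 0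

/-- Binary trees with natural number labels. -/
inductive BTree where
  | leaf : BTree
  | node : BTree → ℕ → BTree → BTree

def BTree.inorder : BTree → List ℕ
  | .leaf => []
  | .node l n r => l.inorder ++ [n] ++ r.inorder

def BTree.postorder : BTree → List ℕ
  | .leaf => []
  | .node l n r => l.postorder ++ r.postorder ++ [n]

/-- A tree is decreasing when labels strictly decrease from root to leaves. -/
def BTree.Decreasing : BTree → Prop
  | .leaf => True
  | .node l n r =>
      l.Decreasing ∧ r.Decreasing ∧
      (∀ x ∈ l.inorder, x < n) ∧ (∀ x ∈ r.inorder, x < n)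

/-- The underlying unlabeled shape of a tree (labels replaced by `0`). -/
def BTree.shape : BTree → BTree
  | .leaf => .leaf
  | .node l _ r => .node l.shape 0 r.shape

def BTree.map (f : ℕ → ℕ) : BTree → BTree
  | .leaf => .leaf
  | .node l n r => .node (l.map f) (f n) (r.map f)

/-- Labels on the rightmost branch from the root. -/
def BTree.rightBranch : BTree → List ℕ
  | .leaf => []
  | .node _ n r => n :: r.rightBranch

/-- Labels on the leftmost branch from the root. -/
def BTree.leftBranch : BTree → List ℕ
  | .leaf => []
  | .node l n _ => n :: l.leftBranch

def TinAux : ℕ → List ℕ → BTree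
  | 0, _ => .leaf
  | _ + 1, [] => .leaf
  | fuel + 1, x :: xs =>
    let l := x :: xs
    let m := l.foldr max 0
    .node (TinAux fuel (l.takeWhile (· ≠ m))) m
          (TinAux fuel ((l.dropWhile (· ≠ m)).tail))

/-- The decreasing binary tree whose in-order reading is `l`. -/
def Tin (l : List ℕ) : BTree := TinAux l.length l

def PpermAux : ℕ → List ℕ → List ℕ
  | 0, _ => []
  | _ + 1, [] => []
  | fuel + 1, x :: xs =>
    let l := x :: xs
    let m := l.foldr max 0
    let α := l.takeWhile (· ≠ m)
    let β := (l.dropWhile (· ≠ m)).tail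
    (PpermAux fuel α).map (· + β.length) ++ [m] ++
      PpermAux fuel (β.map (· - α.length))

/-- The bijection `P` from 231-avoiding to 132-avoiding permutations,
`P(ε) = ε` and `P(α ⊕ (1 ⊖ β)) = (P(α) ⊕ 1) ⊖ P(β)`. -/
def Pperm (l : List ℕ) : List ℕ := PpermAux l.length l

/-- Direct sum of permutations: `α ⊕ β`. -/
def osum (α β : List ℕ) : List ℕ := α ++ β.map (· + α.length)

/-- Skew sum of permutations: `α ⊖ β`. -/
def ossum (α β : List ℕ) : List ℕ := α.map (· + β.length) ++ β

def lrP : ℕ → List ℕ × List ℕ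
  | 0 => ([], [])
  | m + 1 => (ossum [1] (lrP m).2, osum (lrP m).1 [1])

/-- `λ_n`: `λ_{m+1} = 1 ⊖ ρ_m`. -/
def lamP (n : ℕ) : List ℕ := (lrP n).1

/-- `ρ_n`: `ρ_{m+1} = λ_m ⊕ 1`. -/
def rhoP (n : ℕ) : List ℕ := (lrP n).2

/-- `s` and `p` are order isomorphic lists. -/
def OrderIsoList (s p : List ℕ) : Prop :=
  s.length = p.length ∧
  ∀ i j, i < s.length → j < s.length →
    (s.getD i 0 < s.getD j 0 ↔ p.getD i 0 < p.getD j 0)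

/-- `σ` contains the pattern `π`. -/
def Contains (σ π : List ℕ) : Prop :=
  ∃ s : List ℕ, s.Sublist σ ∧ OrderIsoList s π

/-- The up-down word of a permutation (`true` = ascent `u`, `false` = descent `d`). -/
def updown (l : List ℕ) : List Bool :=
  (l.zip l.tail).map (fun p => decide (p.1 < p.2))

/-- No value larger than `max x y` occurs (strictly) between `x` and `y` in `l`. -/
def NoLargerBetween (l : List ℕ) (x y : ℕ) : Prop :=
  ∀ i j k, i < j → j < k → k < l.length →
    ((l.getD i 0 = x ∧ l.getD k 0 = y) ∨ (l.getD i 0 = y ∧ l.getD k 0 = x)) →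
    l.getD j 0 ≤ max x y

/-- The basic operators: stack sorting `S` and reversal `R`. -/
inductive SOp where
  | s : SOp
  | r : SOp

def applyOp : SOp → List ℕ → List ℕ
  | .s => stackSort
  | .r => List.reverse

/-- A composition of operators from `{S, R}`. -/
def applyOps (ops : List SOp) : List ℕ → List ℕ :=
  ops.foldr (fun op f => applyOp op ∘ f) id

/-- `i` is the position of a left-to-right maximum of `l`. -/
def LRmaxPos (l : List ℕ) (i : ℕ) : Prop :=
  i < l.length ∧ ∀ j, j < i → l.getD j 0 < l.getD i 0

/-- `i` is the position of a right-to-left maximum of `l`. -/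
def RLmaxPos (l : List ℕ) (i : ℕ) : Prop :=
  i < l.length ∧ ∀ j, i < j → j < l.length → l.getD j 0 < l.getD i 0

/-- The reverse Zeilberger statistic: the largest `k` such that
`(n-k+1) … (n-1) n` is a subword of `l`, where `n = l.length`. -/
noncomputable def Rzeil (l : List ℕ) : ℕ :=
  sSup {k | (List.range' (l.length - k + 1) k).Sublist l}

/-!
Split a 231-avoiding permutation of `[1, n]` at its maximum: `π = α n β`. An entry of `α` above
an entry of `β` would form a 231 with `n`, so `α` is a 231-avoiding permutation of `[1, a]`, `β`
one of `[a + 1, a + b]`, and `P(π) = (P(α) ⊕ 1) ⊖ P(β - a)`. Thus `λ_π` fixes `n`, acts on `α`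
as `λ_α` shifted up by `b` and on `β` as a conjugate of `λ_{β - a}`, and sends everything else
below `n` because it is a bijection onto `[1, n]`. Two values on different sides of `n` have `n`
between them, so the theorem follows by induction on `n`.
-/

namespace List

theorem forall_getD_triple_iff {α : Type*} {l : List α} {d : α} {P : α → α → α → Prop} :
    (∀ i j k, i < j → j < k → k < l.length → P (l.getD i d) (l.getD j d) (l.getD k d)) ↔
      ∀ u v w, [u, v, w] <+ l → P u v w := by
  constructor
  · intro h u v w hs
    obtain ⟨is, heq, hinc⟩ := sublist_eq_map_getElem hs
    rcases is with _ | ⟨i, _ | ⟨j, _ | ⟨k, _ | _⟩⟩⟩ <;>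
      simp only [map_cons, map_nil, cons.injEq, reduceCtorEq, and_false] at heq
    obtain ⟨rfl, rfl, rfl, -⟩ := heq
    simp only [pairwise_cons, mem_cons, not_mem_nil, forall_eq_or_imp, Pairwise.nil] at hinc
    simpa [getD_eq_getElem] using h i j k hinc.1.1 hinc.2.1.1 k.2
  · intro h i j k hij hjk hk
    rw [getD_eq_getElem _ _ (by omega), getD_eq_getElem _ _ (by omega), getD_eq_getElem _ _ hk]
    apply h
    simpa using map_getElem_sublist (l := l) (is := [⟨i, by omega⟩, ⟨j, by omega⟩, ⟨k, hk⟩])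
      (by simp [Fin.mk_lt_mk]; omega)

theorem exists_of_triple_sublist_map {α β : Type*} {l : List α} {f : α → β} {u' v' w' : β}
    (h : [u', v', w'] <+ l.map f) :
    ∃ u v w, [u, v, w] <+ l ∧ u' = f u ∧ v' = f v ∧ w' = f w := by
  obtain ⟨l', hl', hmap⟩ := sublist_map_iff.1 h
  rcases l' with _ | ⟨u, _ | ⟨v, _ | ⟨w, _ | _⟩⟩⟩ <;>
    simp only [map_cons, map_nil, cons.injEq, reduceCtorEq, and_false] at hmap
  exact ⟨u, v, w, hl', hmap.1, hmap.2.1, hmap.2.2.1⟩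

theorem map_eq_of_forall_getD {α β : Type*} {l : List α} {l' : List β} {f : α → β} {d : α}
    {d' : β} (hlen : l.length = l'.length) (h : ∀ i, i < l.length → f (l.getD i d) = l'.getD i d') :
    l.map f = l' :=
  ext_getElem (by simp [hlen]) fun i hi _ => by
    have hi : i < l.length := by simpa using hi
    rw [getElem_map, ← getD_eq_getElem _ d hi, ← getD_eq_getElem _ d' (hlen ▸ hi), h i hi]

theorem perm_range'_of_append {l₁ l₂ : List ℕ} {s : ℕ}
    (h : l₁ ++ l₂ ~ range' s (l₁.length + l₂.length)) (hle : ∀ u ∈ l₁, ∀ w ∈ l₂, u ≤ w) :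
    l₁ ~ range' s l₁.length ∧ l₂ ~ range' (s + l₁.length) l₂.length := by
  have hsorted : (l₁.insertionSort (· ≤ ·) ++ l₂.insertionSort (· ≤ ·)).Pairwise (· ≤ ·) :=
    pairwise_append.2 ⟨pairwise_insertionSort _ l₁, pairwise_insertionSort _ l₂,
      fun u hu w hw => hle u ((mem_insertionSort _).1 hu) w ((mem_insertionSort _).1 hw)⟩
  have hperm := ((perm_insertionSort (· ≤ ·) l₁).append (perm_insertionSort (· ≤ ·) l₂)).trans h
  have heq := hperm.eq_of_pairwise' hsorted (pairwise_le_range' 1)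
  rw [← range'_append_1] at heq
  obtain ⟨h₁, h₂⟩ := append_inj heq (by simp)
  exact ⟨h₁ ▸ (perm_insertionSort _ l₁).symm, h₂ ▸ (perm_insertionSort _ l₂).symm⟩

theorem Perm.mem_range'_1 {l : List ℕ} {s n v : ℕ} (h : l ~ range' s n) (hv : v ∈ l) :
    s ≤ v ∧ v < s + n :=
  List.mem_range'_1.1 (h.subset hv)

theorem Perm.map_sub_range' {l : List ℕ} {a n : ℕ} (h : l ~ range' (a + 1) n) :
    l.map (· - a) ~ range' 1 n := by
  simpa [List.map_sub_range'] using h.map (· - a)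

theorem Perm.strictMonoOn_sub {l : List ℕ} {a n : ℕ} (h : l ~ range' (a + 1) n) :
    StrictMonoOn (· - a) {v | v ∈ l} := by
  intro u hu v hv huv
  have := h.mem_range'_1 hu
  have := h.mem_range'_1 hv
  simp only
  omega

theorem lt_of_map_perm_range' {l : List ℕ} {f : ℕ → ℕ} {N x y : ℕ} (hf : l.map f ~ range' 1 N)
    (hx : x ∈ l) (hy : y ∈ l) (hxy : x ≠ y) (hfy : f y = N) : f x < N := by
  have hinj := inj_on_of_nodup_map (hf.nodup_iff.2 nodup_range')
  have := hf.mem_range'_1 (mem_map_of_mem hx)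
  have : f x ≠ N := fun h => hxy (hinj hx hy (h.trans hfy.symm))
  omega

theorem foldr_max_mem {l : List ℕ} (hl : l ≠ []) : l.foldr max 0 ∈ l :=
  maximum_mem (foldr_max_of_ne_nil hl).symm

theorem takeWhile_append_cons_tail_dropWhile {α : Type*} [DecidableEq α] {l : List α} {m : α}
    (hm : m ∈ l) : l.takeWhile (· ≠ m) ++ m :: (l.dropWhile (· ≠ m)).tail = l := by
  induction l with
  | nil => simp at hm
  | cons x xs ih =>
    by_cases hx : x = m
    · simp [hx]
    · rw [takeWhile_cons_of_pos (by simpa), dropWhile_cons_of_pos (by simpa), cons_append,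
        ih ((mem_cons.1 hm).resolve_left (Ne.symm hx))]

end List

open List

theorem avoids231_iff_sublist {l : List ℕ} :
    Avoids231 l ↔ ∀ u v w, [u, v, w] <+ l → w < u → v ≤ u := by
  rw [← forall_getD_triple_iff (d := 0), Avoids231]
  push Not
  rfl

theorem noLargerBetween_iff_sublist {l : List ℕ} {x y : ℕ} :
    NoLargerBetween l x y ↔
      ∀ u v w, [u, v, w] <+ l → (u = x ∧ w = y ∨ u = y ∧ w = x) → v ≤ max x y :=
  forall_getD_triple_iff (d := 0) (P := fun u v w => (u = x ∧ w = y ∨ u = y ∧ w = x) → v ≤ max x y)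

theorem Avoids231.sublist {l₁ l₂ : List ℕ} (h : Avoids231 l₂) (hl : l₁ <+ l₂) : Avoids231 l₁ :=
  avoids231_iff_sublist.2 fun u v w huvw => avoids231_iff_sublist.1 h u v w (huvw.trans hl)

theorem Avoids231.map {l : List ℕ} {f : ℕ → ℕ} (h : Avoids231 l) (hf : StrictMonoOn f {v | v ∈ l}) :
    Avoids231 (l.map f) := by
  refine avoids231_iff_sublist.2 fun _ _ _ huvw => ?_
  obtain ⟨u, v, w, hl', rfl, rfl, rfl⟩ := exists_of_triple_sublist_map huvw
  have hu : u ∈ l := hl'.subset (by simp)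
  have hv : v ∈ l := hl'.subset (by simp)
  have hw : w ∈ l := hl'.subset (by simp)
  intro hwu
  exact (hf.le_iff_le hv hu).2 <| avoids231_iff_sublist.1 h u v w hl' ((hf.lt_iff_lt hw hu).1 hwu)

theorem NoLargerBetween.sublist {l₁ l₂ : List ℕ} {x y : ℕ} (h : NoLargerBetween l₂ x y)
    (hl : l₁ <+ l₂) : NoLargerBetween l₁ x y :=
  noLargerBetween_iff_sublist.2 fun u v w huvw =>
    noLargerBetween_iff_sublist.1 h u v w (huvw.trans hl)

theorem NoLargerBetween.map {l : List ℕ} {x y : ℕ} {f : ℕ → ℕ} (h : NoLargerBetween l x y)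
    (hf : StrictMonoOn f {v | v ∈ l}) (hx : x ∈ l) (hy : y ∈ l) :
    NoLargerBetween (l.map f) (f x) (f y) := by
  refine noLargerBetween_iff_sublist.2 fun _ _ _ huvw => ?_
  obtain ⟨u, v, w, hl', rfl, rfl, rfl⟩ := exists_of_triple_sublist_map huvw
  have hu : u ∈ l := hl'.subset (by simp)
  have hv : v ∈ l := hl'.subset (by simp)
  have hw : w ∈ l := hl'.subset (by simp)
  simp only [hf.injOn.eq_iff hu hx, hf.injOn.eq_iff hu hy, hf.injOn.eq_iff hw hx,
    hf.injOn.eq_iff hw hy]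
  intro hends
  have hvxy := noLargerBetween_iff_sublist.1 h u v w hl' hends
  rw [← hf.monotoneOn.map_max hx hy]
  exact hf.monotoneOn hv (by rcases max_choice x y with h | h <;> rw [h] <;> assumption) hvxy

theorem NoLargerBetween.le_max_of_mem_append_cons {α β : List ℕ} {m x y : ℕ}
    (h : NoLargerBetween (α ++ m :: β) x y) (hx : x ∈ α) (hy : y ∈ β) : m ≤ max x y :=
  noLargerBetween_iff_sublist.1 h x m y
    ((singleton_sublist.2 hx).append ((singleton_sublist.2 hy).cons_cons m)) (.inl ⟨rfl, rfl⟩)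

theorem ppermAux_eq_pperm {f : ℕ} {l : List ℕ} (hlen : l.length ≤ f) : PpermAux f l = Pperm l := by
  induction f using Nat.strong_induction_on generalizing l with
  | _ f ih =>
  rcases f with _ | f
  · rw [length_eq_zero_iff.1 (Nat.le_zero.1 hlen)]; rfl
  rcases l with _ | ⟨x, xs⟩
  · rfl
  have hsplit := congrArg length
    (takeWhile_append_cons_tail_dropWhile (foldr_max_mem (cons_ne_nil x xs)))
  simp only [length_append, length_cons] at hsplit hlen
  rw [Pperm, length_cons]
  simp only [PpermAux]
  rw [ih f (by omega) (by omega), ih xs.length (by omega) (by omega),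
    ih f (by omega) (by rw [length_map]; omega), ih xs.length (by omega) (by rw [length_map]; omega)]

theorem pperm_append_cons {α β : List ℕ} {m : ℕ} (hα : ∀ u ∈ α, u < m) (hβ : ∀ w ∈ β, w < m) :
    Pperm (α ++ m :: β) = (Pperm α).map (· + β.length) ++ m :: Pperm (β.map (· - α.length)) := by
  have hmax : (α ++ m :: β).foldr max 0 = m := by
    refine le_antisymm (max_le_of_forall_le _ _ fun v hv => ?_) (le_max_of_le (by simp) le_rfl)
    rcases mem_append.1 hv with hv | hv
    · exact (hα v hv).le
    · rcases mem_cons.1 hv with rfl | hv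
      · exact le_rfl
      · exact (hβ v hv).le
  have htake : (α ++ m :: β).takeWhile (· ≠ m) = α := by
    rw [takeWhile_append_of_pos (by simpa using fun u hu => (hα u hu).ne)]
    simp
  have hdrop : ((α ++ m :: β).dropWhile (· ≠ m)).tail = β := by
    rw [dropWhile_append_of_pos (by simpa using fun u hu => (hα u hu).ne)]
    simp
  rcases h : α ++ m :: β with _ | ⟨x, xs⟩
  · simp at h
  have hlen := congrArg length h
  simp only [length_append, length_cons] at hlen
  rw [Pperm, length_cons]
  simp only [PpermAux]
  rw [← h, hmax, htake, hdrop, ppermAux_eq_pperm (by omega),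
    ppermAux_eq_pperm (by rw [length_map]; omega)]
  simp

theorem pperm_append_cons_of_perm_range' {α β : List ℕ} {n : ℕ} (hn : n = α.length + β.length)
    (hα : α ~ range' 1 α.length) (hβ : β ~ range' (α.length + 1) β.length) :
    Pperm (α ++ (n + 1) :: β) =
      (Pperm α).map (· + β.length) ++ (n + 1) :: Pperm (β.map (· - α.length)) :=
  pperm_append_cons (fun u hu => by have := hα.mem_range'_1 hu; omega)
    (fun w hw => by have := hβ.mem_range'_1 hw; omega)

theorem Avoids231.exists_append_cons {π : List ℕ} {n : ℕ} (h : Avoids231 π)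
    (hπ : π ~ range' 1 (n + 1)) :
    ∃ α β, π = α ++ (n + 1) :: β ∧ n = α.length + β.length ∧ α ~ range' 1 α.length ∧
      β ~ range' (α.length + 1) β.length := by
  obtain ⟨α, β, rfl⟩ := append_of_mem (hπ.symm.subset (by simp : n + 1 ∈ range' 1 (n + 1)))
  have hrest : α ++ β ~ range' 1 n := by
    have hconcat : range' 1 n ++ [n + 1] = range' 1 (n + 1) := by rw [range'_1_concat, add_comm]
    rw [← perm_append_right_iff [n + 1], hconcat]
    exact perm_append_comm.trans ((perm_middle (l₁ := α) (l₂ := β)).symm.trans hπ)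
  have hle : ∀ u ∈ α, ∀ w ∈ β, u ≤ w := by
    intro u hu w hw
    by_contra! hwu
    have := hrest.mem_range'_1 (mem_append_left β hu)
    have hsub : [u, n + 1, w] <+ α ++ (n + 1) :: β :=
      (singleton_sublist.2 hu).append ((singleton_sublist.2 hw).cons_cons (n + 1))
    have := avoids231_iff_sublist.1 h u (n + 1) w hsub hwu
    omega
  have hlen : n = α.length + β.length := by simpa using hrest.length_eq.symm
  obtain ⟨hα, hβ⟩ := perm_range'_of_append (hlen ▸ hrest) hle
  exact ⟨α, β, rfl, hlen, hα, by rwa [add_comm] at hβ⟩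

theorem Avoids231.pperm_perm_range' {π : List ℕ} {n : ℕ} (h : Avoids231 π)
    (hπ : π ~ range' 1 n) : Pperm π ~ range' 1 n := by
  induction n using Nat.strong_induction_on generalizing π with
  | _ n ih =>
  rcases n with _ | n
  · rw [perm_nil.1 hπ]; rfl
  obtain ⟨α, β, rfl, hn, hα, hβ⟩ := h.exists_append_cons hπ
  have hPα := ih α.length (by omega) (h.sublist (sublist_append_left _ _)) hα
  have hPβ := ih β.length (by omega)
    ((h.sublist ((sublist_cons_self _ _).trans (sublist_append_right _ _))).map
      hβ.strictMonoOn_sub) hβ.map_sub_range'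
  rw [pperm_append_cons_of_perm_range' hn hα hβ]
  have hshift : (Pperm α).map (· + β.length) ~ range' (β.length + 1) α.length := by
    rw [show (· + β.length) = (β.length + ·) from funext fun _ => add_comm _ _]
    simpa [map_add_range'] using hPα.map (β.length + ·)
  calc (Pperm α).map (· + β.length) ++ (n + 1) :: Pperm (β.map (· - α.length))
      ~ range' (β.length + 1) α.length ++ (n + 1) :: range' 1 β.length :=
        hshift.append (hPβ.cons _)
    _ ~ range' 1 β.length ++ (range' (β.length + 1) α.length ++ [n + 1]) := by
        rw [← singleton_append, ← append_assoc]
        exact perm_append_comm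
    _ = range' 1 (n + 1) := by
        rw [range'_1_concat, ← append_assoc, add_comm β.length 1, range'_append_1, hn,
          add_comm β.length, add_comm 1]

theorem Avoids231.map_eq_pperm_of_append_cons {α β : List ℕ} {n : ℕ} {lam : ℕ → ℕ}
    (h : Avoids231 (α ++ (n + 1) :: β)) (hn : n = α.length + β.length)
    (hα : α ~ range' 1 α.length) (hβ : β ~ range' (α.length + 1) β.length)
    (hlam : (α ++ (n + 1) :: β).map lam = Pperm (α ++ (n + 1) :: β)) :
    α.map (fun v => lam v - β.length) = Pperm α ∧ lam (n + 1) = n + 1 ∧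
      (β.map (· - α.length)).map (fun v => lam (v + α.length)) = Pperm (β.map (· - α.length)) := by
  rw [pperm_append_cons_of_perm_range' hn hα hβ, map_append, map_cons] at hlam
  have hPα := (h.sublist (sublist_append_left _ _)).pperm_perm_range' hα
  obtain ⟨hlamα, hlamtop, hlamβ⟩ : α.map lam = (Pperm α).map (· + β.length) ∧ lam (n + 1) = n + 1 ∧
      β.map lam = Pperm (β.map (· - α.length)) := by
    obtain ⟨h₁, h₂⟩ := append_inj hlam (by simp [hPα.length_eq])
    exact ⟨h₁, cons.inj h₂⟩
  refine ⟨by simpa [Function.comp_def] using congrArg (List.map (· - β.length)) hlamα, hlamtop, ?_⟩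
  rw [map_map, ← hlamβ]
  refine map_congr_left fun w hw => ?_
  have := hβ.mem_range'_1 hw
  simp only [Function.comp_apply]
  congr 1
  omega

theorem Avoids231.lt_of_map_eq_pperm {π : List ℕ} {n : ℕ} {lam : ℕ → ℕ} {x y : ℕ}
    (h : Avoids231 π) (hπ : π ~ range' 1 n) (hlam : π.map lam = Pperm π) (hxy : x < y)
    (hx : x ∈ π) (hy : y ∈ π) (hxy_between : NoLargerBetween π x y) : lam x < lam y := by
  induction n using Nat.strong_induction_on generalizing π lam x y with
  | _ n ih =>
  rcases n with _ | n
  · simp [perm_nil.1 hπ] at hx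
  have hlam_perm : π.map lam ~ range' 1 (n + 1) := hlam ▸ h.pperm_perm_range' hπ
  have hy_le := hπ.mem_range'_1 hy
  obtain ⟨α, β, rfl, hn, hα, hβ⟩ := h.exists_append_cons hπ
  obtain ⟨hlamα, hlamtop, hlamβ⟩ := h.map_eq_pperm_of_append_cons hn hα hβ hlam
  have hsubα : α <+ α ++ (n + 1) :: β := sublist_append_left _ _
  have hsubβ : β <+ α ++ (n + 1) :: β := (sublist_cons_self _ _).trans (sublist_append_right _ _)
  rcases mem_append.1 hx with hxα | hxβ <;> rcases mem_append.1 hy with hyα | hyβ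
  · have := ih α.length (by omega) (h.sublist hsubα) hα hlamα hxy hxα hyα
      (hxy_between.sublist hsubα)
    omega
  · rcases mem_cons.1 hyβ with rfl | hyβ
    · rw [hlamtop]
      exact lt_of_map_perm_range' hlam_perm hx hy hxy.ne hlamtop
    · have := hxy_between.le_max_of_mem_append_cons hxα hyβ
      have := hβ.mem_range'_1 hyβ
      omega
  · rcases mem_cons.1 hxβ with rfl | hxβ
    · omega
    · have := hα.mem_range'_1 hyα
      have := hβ.mem_range'_1 hxβ
      omega
  · rcases mem_cons.1 hxβ with rfl | hxβ
    · omega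
    rcases mem_cons.1 hyβ with rfl | hyβ
    · rw [hlamtop]
      exact lt_of_map_perm_range' hlam_perm hx hy hxy.ne hlamtop
    have hmono := hβ.strictMonoOn_sub
    have hlt := ih β.length (by omega) ((h.sublist hsubβ).map hmono) hβ.map_sub_range' hlamβ
      (hmono hxβ hyβ hxy) (mem_map_of_mem hxβ) (mem_map_of_mem hyβ)
      ((hxy_between.sublist hsubβ).map hmono hxβ hyβ)
    have := hβ.mem_range'_1 hxβ
    have := hβ.mem_range'_1 hyβ
    rwa [Nat.sub_add_cancel (by omega), Nat.sub_add_cancel (by omega)] at hlt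

/-- the relabeling `λ_π` (with `P(π) = λ_π ∘ π`) preserves the
order of values `x < y` having no larger value between them in `π`. -/
theorem relabeling_preserves_order :
    ∀ π : List ℕ, π.Perm (List.range' 1 π.length) → Avoids231 π →
      ∀ lam : ℕ → ℕ,
        (∀ i, i < π.length → lam (π.getD i 0) = (Pperm π).getD i 0) →
        ∀ x y : ℕ, x < y → x ∈ π → y ∈ π →
          NoLargerBetween π x y → lam x < lam y := by
  intro π hπ h lam hlam x y hxy hx hy hxy_between
  have hlen : π.length = (Pperm π).length := by simp [(h.pperm_perm_range' hπ).length_eq]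
  exact h.lt_of_map_eq_pperm hπ (map_eq_of_forall_getD hlen hlam) hxy hx hy hxy_between
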